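/- arXiv:2209.01528 — 2 statements merged into one kernel-verified Lean document; each statement's English description precedes it below -/
import Mathlib

section
/- Let η > 0, φ₀ ∈ (0,1), let c̄ : [0,T] → ℝ be continuous with 0 ≤ c̄(t) ≤ 1, and let φ : [0,T] → ℝ be differentiable with φ(0) = φ₀ and φ'(t) = η (1 − φ(t)) c̄(t). Then 0 ≤ φ'(t) ≤ η (1 − φ₀) ≤ η for all t ∈ [0,T]; in particular φ is monotone nondecreasing. -/
/-! With `u = 1 - φ` the equation is linear, `u' = -η c u`, and `0 ≤ c ≤ 1` makes `u² e^{2ηt}`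
nondecreasing, so `u` never vanishes and, by the intermediate value theorem, stays positive. Hence
`φ' ≥ 0`, so `φ ≥ φ₀`, and `φ' ≤ η (1 - φ) ≤ η (1 - φ₀)`. -/

open Set Real

theorem monotoneOn_of_hasDerivAt_nonneg {D : Set ℝ} (hD : Convex ℝ D) {f f' : ℝ → ℝ}
    (hf : ∀ x ∈ D, HasDerivAt f (f' x) x) (hf'₀ : ∀ x ∈ D, 0 ≤ f' x) : MonotoneOn f D :=
  monotoneOn_of_hasDerivWithinAt_nonneg hD
    (fun x hx => (hf x hx).continuousAt.continuousWithinAt)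
    (fun x hx => (hf x (interior_subset hx)).hasDerivWithinAt)
    (fun x hx => hf'₀ x (interior_subset hx))

section LinearODE

variable {u k : ℝ → ℝ} {a b K : ℝ}

/-- For `u' = k u` with `k ≥ -K`, the derivative of `u² e^{2Kt}` is `2 (k + K) u² e^{2Kt} ≥ 0`. -/
theorem monotoneOn_sq_mul_exp_of_hasDerivAt_mul
    (hu : ∀ t ∈ Icc a b, HasDerivAt u (k t * u t) t) (hk : ∀ t ∈ Icc a b, -K ≤ k t) :
    MonotoneOn (fun t => u t ^ 2 * exp (2 * K * t)) (Icc a b) := by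
  refine monotoneOn_of_hasDerivAt_nonneg (convex_Icc a b)
    (f' := fun t => 2 * (k t + K) * u t ^ 2 * exp (2 * K * t)) (fun t ht => ?_) (fun t ht => ?_)
  · have hexp : HasDerivAt (fun s => exp (2 * K * s)) (exp (2 * K * t) * (2 * K)) t := by
      simpa using ((hasDerivAt_id t).const_mul (2 * K)).exp
    exact ((hu t ht).pow 2 |>.mul hexp).congr_deriv (by simp only [Pi.pow_apply]; push_cast; ring)
  · have : 0 ≤ k t + K := by linarith [hk t ht]
    positivity

theorem ne_zero_of_hasDerivAt_mul
    (hu : ∀ t ∈ Icc a b, HasDerivAt u (k t * u t) t) (hk : ∀ t ∈ Icc a b, -K ≤ k t)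
    (ha : u a ≠ 0) {t : ℝ} (ht : t ∈ Icc a b) : u t ≠ 0 := by
  intro hut
  have hmono : u a ^ 2 * exp (2 * K * a) ≤ u t ^ 2 * exp (2 * K * t) :=
    monotoneOn_sq_mul_exp_of_hasDerivAt_mul hu hk ⟨le_rfl, ht.1.trans ht.2⟩ ht ht.1
  rw [hut, zero_pow two_ne_zero, zero_mul] at hmono
  exact (by positivity : 0 < u a ^ 2 * exp (2 * K * a)).not_ge hmono

theorem pos_of_hasDerivAt_mul
    (hu : ∀ t ∈ Icc a b, HasDerivAt u (k t * u t) t) (hk : ∀ t ∈ Icc a b, -K ≤ k t)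
    (ha : 0 < u a) {t : ℝ} (ht : t ∈ Icc a b) : 0 < u t := by
  by_contra! hut
  have hcont : ContinuousOn u (Icc a t) := fun s hs =>
    (hu s ⟨hs.1, hs.2.trans ht.2⟩).continuousAt.continuousWithinAt
  obtain ⟨s, hs, hus⟩ := intermediate_value_Icc' ht.1 hcont ⟨hut, ha.le⟩
  exact ne_zero_of_hasDerivAt_mul hu hk ha.ne' ⟨hs.1, hs.2.trans ht.2⟩ hus

end LinearODE

theorem porosity_derivative_bound_general
    (T η φ₀ : ℝ) (hη : 0 < η) (hφ₀ : φ₀ ∈ Set.Ioo (0:ℝ) 1)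
    (c : ℝ → ℝ)
    (hc_bd : ∀ t ∈ Set.Icc (0:ℝ) T, 0 ≤ c t ∧ c t ≤ 1)
    (φ : ℝ → ℝ) (hφ0 : φ 0 = φ₀)
    (hφ' : ∀ t ∈ Set.Icc (0:ℝ) T, HasDerivAt φ (η * (1 - φ t) * c t) t) :
    (∀ t ∈ Set.Icc (0:ℝ) T,
      0 ≤ η * (1 - φ t) * c t ∧ η * (1 - φ t) * c t ≤ η * (1 - φ₀) ∧
        η * (1 - φ₀) ≤ η) ∧
    MonotoneOn φ (Set.Icc 0 T) := by
  obtain ⟨hφ₀_pos, hφ₀_lt_one⟩ := hφ₀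
  have hu : ∀ t ∈ Icc 0 T, HasDerivAt (fun s => 1 - φ s) (-(η * c t) * (1 - φ t)) t :=
    fun t ht => ((hφ' t ht).const_sub 1).congr_deriv (by ring)
  have hk : ∀ t ∈ Icc 0 T, -η ≤ -(η * c t) :=
    fun t ht => neg_le_neg (mul_le_of_le_one_right hη.le (hc_bd t ht).2)
  have hu_pos : ∀ t ∈ Icc 0 T, 0 < 1 - φ t :=
    fun t ht => pos_of_hasDerivAt_mul hu hk (by linarith) ht
  have hφ'_nonneg : ∀ t ∈ Icc 0 T, 0 ≤ η * (1 - φ t) * c t := fun t ht =>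
    mul_nonneg (mul_nonneg hη.le (hu_pos t ht).le) (hc_bd t ht).1
  have hmono : MonotoneOn φ (Icc 0 T) :=
    monotoneOn_of_hasDerivAt_nonneg (convex_Icc 0 T) hφ' hφ'_nonneg
  refine ⟨fun t ht => ⟨hφ'_nonneg t ht, ?_, by nlinarith⟩, hmono⟩
  have hφ₀_le : φ₀ ≤ φ t := hφ0 ▸ hmono ⟨le_rfl, ht.1.trans ht.2⟩ ht ht.1
  calc η * (1 - φ t) * c t ≤ η * (1 - φ t) :=
        mul_le_of_le_one_right (mul_nonneg hη.le (hu_pos t ht).le) (hc_bd t ht).2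
    _ ≤ η * (1 - φ₀) := by gcongr

theorem porosity_derivative_bound
    (T η φ₀ : ℝ) (hη : 0 < η) (hφ₀ : φ₀ ∈ Set.Ioo (0:ℝ) 1)
    (c : ℝ → ℝ) (hc_cont : ContinuousOn c (Set.Icc 0 T))
    (hc_bd : ∀ t ∈ Set.Icc (0:ℝ) T, 0 ≤ c t ∧ c t ≤ 1)
    (φ : ℝ → ℝ) (hφ0 : φ 0 = φ₀)
    (hφ' : ∀ t ∈ Set.Icc (0:ℝ) T, HasDerivAt φ (η * (1 - φ t) * c t) t) :
    (∀ t ∈ Set.Icc (0:ℝ) T,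
      0 ≤ η * (1 - φ t) * c t ∧ η * (1 - φ t) * c t ≤ η * (1 - φ₀) ∧
        η * (1 - φ₀) ≤ η) ∧
    MonotoneOn φ (Set.Icc 0 T) :=
  porosity_derivative_bound_general T η φ₀ hη hφ₀ c hc_bd φ hφ0 hφ'
end

section
/- Let η > 0 and φ₀ ∈ (0,1). Suppose φ, φ_h : [0,T] → ℝ are differentiable with φ(0) = φ_h(0) = φ₀, φ'(t) = η (1 − φ(t)) c(t), φ_h'(t) = η (1 − φ_h(t)) c_h(t), where c, c_h : [0,T] → ℝ are continuous with values in [0,1], and φ(t), φ_h(t) ∈ [φ₀, 1] for all t. Then |φ(t) − φ_h(t)| ≤ η e^{η t} ∫₀ᵗ |c(s) − c_h(s)| ds for all t ∈ [0,T]. -/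
/-!
The error `e = φ - φh` vanishes at `0` and satisfies
`e' = η ((1 - φ)(c - ch) + (φh - φ) ch)`, so `|e'| ≤ η |c - ch| + η |e|` because
`|1 - φ| ≤ 1` and `|ch| ≤ 1`. Integrating, `|e|` is bounded by `∫ (η |c - ch| + η |e|)`, and the
integral form of Gronwall's inequality with the nondecreasing forcing `∫ η |c - ch|` gives the
factor `e^{η t}`.
-/

open Set Real intervalIntegral MeasureTheory

section Primitive

variable {E : Type*} [NormedAddCommGroup E] [NormedSpace ℝ E] {f : ℝ → E} {a b : ℝ}

theorem ContinuousOn.continuousOn_primitive_Icc (hf : ContinuousOn f (Icc a b)) :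
    ContinuousOn (fun x => ∫ s in a..x, f s) (Icc a b) := by
  rcases le_or_gt a b with hab | hba
  · refine (continuousOn_primitive_interval ?_).mono Icc_subset_uIcc
    rw [uIcc_of_le hab]
    exact hf.integrableOn_Icc
  · simp [Icc_eq_empty_of_lt hba]

theorem ContinuousOn.hasDerivAt_primitive [CompleteSpace E] (hf : ContinuousOn f (Icc a b)) {x : ℝ}
    (hx : x ∈ Ioo a b) : HasDerivAt (fun y => ∫ s in a..y, f s) (f x) x :=
  have hIcc : Icc a b ∈ nhds x := Icc_mem_nhds hx.1 hx.2
  integral_hasDerivAt_right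
    ((hf.mono (Icc_subset_Icc_right hx.2.le)).intervalIntegrable_of_Icc hx.1.le)
    ⟨Icc a b, hIcc, hf.aestronglyMeasurable measurableSet_Icc⟩ (hf.continuousAt hIcc)

end Primitive

theorem le_exp_mul_integral_of_le_integral {u α : ℝ → ℝ} {K a b : ℝ} (hK : 0 ≤ K) (hab : a ≤ b)
    (hu : ContinuousOn u (Icc a b)) (hα : ContinuousOn α (Icc a b))
    (hα₀ : ∀ x ∈ Icc a b, 0 ≤ α x) (hle : ∀ x ∈ Icc a b, u x ≤ ∫ s in a..x, (α s + K * u s)) :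
    u b ≤ exp (K * (b - a)) * ∫ s in a..b, α s := by
  set F := fun x => ∫ s in a..x, (α s + K * u s)
  set A := fun x => ∫ s in a..x, α s
  set w := fun x => exp (-K * (x - a))
  have hF : ContinuousOn (fun s => α s + K * u s) (Icc a b) := hα.add (continuousOn_const.mul hu)
  have hw : ∀ x, HasDerivAt w (-K * w x) x := fun x => by
    have h : HasDerivAt (fun x => -K * (x - a)) (-K) x := by
      simpa using ((hasDerivAt_id x).sub_const a).const_mul (-K)
    simpa [w, mul_comm] using h.exp
  -- `w` is the integrating factor of `F' ≤ α + K F`.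
  have hmono : MonotoneOn (fun x => A x - w x * F x) (Icc a b) := by
    refine monotoneOn_of_hasDerivWithinAt_nonneg (convex_Icc a b)
      (f' := fun x => α x - (-K * w x * F x + w x * (α x + K * u x)))
      (hα.continuousOn_primitive_Icc.sub
        ((Continuous.continuousOn (by fun_prop)).mul hF.continuousOn_primitive_Icc))
      (fun x hx => ?_) (fun x hx => ?_)
    · rw [interior_Icc] at hx
      exact ((hα.hasDerivAt_primitive hx).sub
        ((hw x).mul (hF.hasDerivAt_primitive hx))).hasDerivWithinAt
    · rw [interior_Icc] at hx
      have hw₁ : w x ≤ 1 := exp_le_one_iff.2 (by nlinarith [hx.1])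
      have hFu : u x ≤ F x := hle x (Ioo_subset_Icc_self hx)
      calc 0 ≤ α x * (1 - w x) + K * w x * (F x - u x) :=
            add_nonneg (mul_nonneg (hα₀ x (Ioo_subset_Icc_self hx)) (by linarith))
              (mul_nonneg (mul_nonneg hK (exp_pos _).le) (by linarith))
        _ = α x - (-K * w x * F x + w x * (α x + K * u x)) := by ring
  have hAF : w b * F b ≤ A b := by
    simpa [A, F, w] using hmono (left_mem_Icc.2 hab) (right_mem_Icc.2 hab) hab
  calc u b ≤ F b := hle b (right_mem_Icc.2 hab)
    _ ≤ exp (K * (b - a)) * A b := by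
      rwa [← inv_mul_le_iff₀ (exp_pos _), ← exp_neg, ← neg_mul]

theorem norm_le_exp_mul_integral_of_norm_deriv_le {E : Type*} [NormedAddCommGroup E]
    [NormedSpace ℝ E] {f f' : ℝ → E} {α : ℝ → ℝ} {K a b : ℝ} (hK : 0 ≤ K) (hab : a ≤ b)
    (hfa : f a = 0) (hf : ∀ x ∈ Icc a b, HasDerivAt f (f' x) x) (hα : ContinuousOn α (Icc a b))
    (hα₀ : ∀ x ∈ Icc a b, 0 ≤ α x) (hbound : ∀ x ∈ Icc a b, ‖f' x‖ ≤ α x + K * ‖f x‖) :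
    ‖f b‖ ≤ exp (K * (b - a)) * ∫ x in a..b, α x := by
  have hfc : ContinuousOn f (Icc a b) := fun x hx => (hf x hx).continuousAt.continuousWithinAt
  refine le_exp_mul_integral_of_le_integral hK hab hfc.norm hα hα₀ fun x hx => ?_
  have hsub : Ioo a x ⊆ Icc a b := Ioo_subset_Icc_self.trans (Icc_subset_Icc_right hx.2)
  simpa [hfa] using norm_sub_le_integral_of_norm_deriv_le_of_le hx.1
    (hfc.mono (Icc_subset_Icc_right hx.2))
    (fun y hy => (hf y (hsub hy)).differentiableAt.differentiableWithinAt)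
    (ae_of_all _ fun y hy => (hf y (hsub hy)).deriv ▸ hbound y (hsub hy))
    (((hα.add (continuousOn_const.mul hfc.norm)).mono
      (Icc_subset_Icc_right hx.2)).intervalIntegrable_of_Icc hx.1)

theorem abs_porosity_rate_sub_le {η p q c d : ℝ} (hη : 0 ≤ η) (hp : p ∈ Icc (0 : ℝ) 1)
    (hd : d ∈ Icc (0 : ℝ) 1) :
    |η * (1 - p) * c - η * (1 - q) * d| ≤ η * |c - d| + η * |p - q| := by
  have hsplit : η * (1 - p) * c - η * (1 - q) * d = η * ((1 - p) * (c - d) + (q - p) * d) := by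
    ring
  rw [hsplit, abs_mul, abs_of_nonneg hη, ← mul_add]
  gcongr
  calc |(1 - p) * (c - d) + (q - p) * d| ≤ |1 - p| * |c - d| + |q - p| * |d| := by
        rw [← abs_mul, ← abs_mul]; exact abs_add_le _ _
    _ ≤ 1 * |c - d| + |p - q| * 1 := by
        rw [abs_sub_comm q p]
        gcongr
        · exact abs_le.2 ⟨by linarith [hp.2], by linarith [hp.1]⟩
        · exact abs_le.2 ⟨by linarith [hd.1], hd.2⟩
    _ = |c - d| + |p - q| := by ring

theorem porosity_stability_general
    (T η φ₀ : ℝ) (hη : 0 < η) (hφ₀ : φ₀ ∈ Set.Ioo (0:ℝ) 1)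
    (c ch : ℝ → ℝ)
    (hc_cont : ContinuousOn c (Set.Icc 0 T)) (hch_cont : ContinuousOn ch (Set.Icc 0 T))
    (hch_bd : ∀ t ∈ Set.Icc (0:ℝ) T, ch t ∈ Set.Icc (0:ℝ) 1)
    (φ φh : ℝ → ℝ) (h0 : φ 0 = φ₀) (h0h : φh 0 = φ₀)
    (hφ' : ∀ t ∈ Set.Icc (0:ℝ) T, HasDerivAt φ (η * (1 - φ t) * c t) t)
    (hφh' : ∀ t ∈ Set.Icc (0:ℝ) T, HasDerivAt φh (η * (1 - φh t) * ch t) t)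
    (hφ_bd : ∀ t ∈ Set.Icc (0:ℝ) T, φ t ∈ Set.Icc φ₀ 1) :
    ∀ t ∈ Set.Icc (0:ℝ) T,
      |φ t - φh t| ≤ η * Real.exp (η * t) * ∫ s in (0:ℝ)..t, |c s - ch s| := by
  intro t ht
  have hsub : Icc 0 t ⊆ Icc 0 T := Icc_subset_Icc_right ht.2
  have hgronwall := norm_le_exp_mul_integral_of_norm_deriv_le (f := fun s => φ s - φh s)
    (α := fun s => η * |c s - ch s|) hη.le ht.1 (by simp [h0, h0h])
    (fun s hs => (hφ' s (hsub hs)).sub (hφh' s (hsub hs)))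
    (continuousOn_const.mul ((hc_cont.sub hch_cont).abs.mono hsub)) (fun s _ => by positivity)
    (fun s hs => abs_porosity_rate_sub_le hη.le (Icc_subset_Icc_left hφ₀.1.le (hφ_bd s (hsub hs)))
      (hch_bd s (hsub hs)))
  rw [mul_assoc]
  simpa [intervalIntegral.integral_const_mul, mul_left_comm] using hgronwall

theorem porosity_stability
    (T η φ₀ : ℝ) (hη : 0 < η) (hφ₀ : φ₀ ∈ Set.Ioo (0:ℝ) 1)
    (c ch : ℝ → ℝ)
    (hc_cont : ContinuousOn c (Set.Icc 0 T)) (hch_cont : ContinuousOn ch (Set.Icc 0 T))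
    (hc_bd : ∀ t ∈ Set.Icc (0:ℝ) T, c t ∈ Set.Icc (0:ℝ) 1)
    (hch_bd : ∀ t ∈ Set.Icc (0:ℝ) T, ch t ∈ Set.Icc (0:ℝ) 1)
    (φ φh : ℝ → ℝ) (h0 : φ 0 = φ₀) (h0h : φh 0 = φ₀)
    (hφ' : ∀ t ∈ Set.Icc (0:ℝ) T, HasDerivAt φ (η * (1 - φ t) * c t) t)
    (hφh' : ∀ t ∈ Set.Icc (0:ℝ) T, HasDerivAt φh (η * (1 - φh t) * ch t) t)
    (hφ_bd : ∀ t ∈ Set.Icc (0:ℝ) T, φ t ∈ Set.Icc φ₀ 1)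
    (hφh_bd : ∀ t ∈ Set.Icc (0:ℝ) T, φh t ∈ Set.Icc φ₀ 1) :
    ∀ t ∈ Set.Icc (0:ℝ) T,
      |φ t - φh t| ≤ η * Real.exp (η * t) * ∫ s in (0:ℝ)..t, |c s - ch s| :=
  porosity_stability_general T η φ₀ hη hφ₀ c ch hc_cont hch_cont hch_bd φ φh h0 h0h hφ' hφh' hφ_bd
end
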